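/- Let n ≥ 2 be an integer. Let (R_1,Z_1),…,(R_n,Z_n) be i.i.d. copies of a pair (R,Z) of square-integrable real random variables satisfying Cov(R_k, Z_j) = 0 for all j,k and Cov(R_k R_{k'}, Z_j Z_{j'}) = 0 for all j,j',k,k'. Write μ_Z = E[Z] and σ_Z² = Var(Z). Then E[(2/(n²(n−1))) (Σ_{j=1}^n R_j Z_j)(Σ_{j'=1}^n Σ_{k=1,k≠j'}^n R_k Z_{j'})] = E[R²] (2/n) μ_Z² + (E[R])² (((2n−2)/n) μ_Z² + (2/n) σ_Z²). -/

import Mathlib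

/-!
Expanding the product, the expectation is the normalising constant times the sum over triples
`(j, j', k)` with `k ≠ j'` of `E[R_j Z_j R_k Z_j']`. Second-order uncorrelation factors each term
as `E[R_j R_k] E[Z_j Z_j']`, and independence with identical distribution evaluates these factors
to `E[R²]` or `(E R)²` and `E[Z²]` or `(E Z)²` according as the indices coincide; counting the
triples of each kind gives the formula. Each term is integrable as a product of two `L²`
variables: `R_k Z_j'` by independence, `R_j Z_j` because `Cov(R_j², Z_j²) = 0`.
-/

open MeasureTheory ProbabilityTheory Finset

/-- Covariance of two real random variables. -/
noncomputable def covar {Ω : Type*} [MeasurableSpace Ω] (μ : Measure Ω) (X Y : Ω → ℝ) : ℝ :=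
  (∫ ω, X ω * Y ω ∂μ) - (∫ ω, X ω ∂μ) * (∫ ω, Y ω ∂μ)

section
variable {Ω : Type*} [MeasurableSpace Ω] {μ : Measure Ω}

lemma integral_mul_eq_of_covar_eq_zero {X Y : Ω → ℝ} (h : covar μ X Y = 0) :
    ∫ ω, X ω * Y ω ∂μ = (∫ ω, X ω ∂μ) * ∫ ω, Y ω ∂μ :=
  sub_eq_zero.mp h

lemma ae_eq_zero_of_integral_sq_eq_zero {X : Ω → ℝ} (hX : MemLp X 2 μ)
    (h : ∫ ω, X ω ^ 2 ∂μ = 0) : X =ᵐ[μ] 0 := by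
  filter_upwards [(integral_eq_zero_iff_of_nonneg (fun ω => sq_nonneg (X ω))
    hX.integrable_sq).1 h] with ω hω
  exact pow_eq_zero_iff two_ne_zero |>.1 hω

/-- If `X ^ 2 * Y ^ 2` were not integrable, its integral would be the junk value `0`, and
uncorrelatedness would force `E[X²] E[Y²] = 0`, i.e. `X * Y = 0` almost everywhere. -/
lemma memLp_two_mul_of_covar_mul_self_eq_zero {X Y : Ω → ℝ} (hX : MemLp X 2 μ)
    (hY : MemLp Y 2 μ) (h : covar μ (fun ω => X ω * X ω) (fun ω => Y ω * Y ω) = 0) :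
    MemLp (fun ω => X ω * Y ω) 2 μ := by
  refine (memLp_two_iff_integrable_sq (hX.1.mul hY.1)).2 ?_
  by_contra hI
  have hprod : (∫ ω, X ω ^ 2 ∂μ) * ∫ ω, Y ω ^ 2 ∂μ = 0 := by
    have hI' : ¬ Integrable (fun ω => X ω * X ω * (Y ω * Y ω)) μ := fun h' =>
      hI (h'.congr (.of_forall fun ω => by simp only [Pi.mul_apply]; ring))
    simpa only [integral_undef hI', sq] using (integral_mul_eq_of_covar_eq_zero h).symm
  have hzero : (fun ω => (X ω * Y ω) ^ 2) =ᵐ[μ] 0 := by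
    rcases mul_eq_zero.1 hprod with hX0 | hY0
    · filter_upwards [ae_eq_zero_of_integral_sq_eq_zero hX hX0] with ω hω
      simp [hω]
    · filter_upwards [ae_eq_zero_of_integral_sq_eq_zero hY hY0] with ω hω
      simp [hω]
  exact hI ((integrable_zero Ω ℝ μ).congr hzero.symm)

lemma ProbabilityTheory.IndepFun.memLp_two_mul {X Y : Ω → ℝ} (hXY : IndepFun X Y μ)
    (hX : MemLp X 2 μ) (hY : MemLp Y 2 μ) : MemLp (fun ω => X ω * Y ω) 2 μ := by
  refine (memLp_two_iff_integrable_sq (hX.1.mul hY.1)).2 ?_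
  refine ((hXY.comp (measurable_id.pow_const 2) (measurable_id.pow_const 2)).integrable_mul
    hX.integrable_sq hY.integrable_sq).congr (.of_forall fun ω => ?_)
  simp [mul_pow]

lemma integral_mul_of_identDistrib_of_pairwise_indepFun {ι : Type*} [DecidableEq ι]
    {X : ι → Ω → ℝ} {X₀ : Ω → ℝ} (hident : ∀ i, IdentDistrib (X i) X₀ μ μ)
    (hindep : Pairwise fun i j => IndepFun (X i) (X j) μ) (i j : ι) :
    ∫ ω, X i ω * X j ω ∂μ
      = if i = j then ∫ ω, X₀ ω ^ 2 ∂μ else (∫ ω, X₀ ω ∂μ) ^ 2 := by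
  split_ifs with hij
  · subst hij
    simpa only [Function.comp_def, Pi.mul_apply, id, sq] using
      ((hident i).comp (measurable_id.mul measurable_id)).integral_eq
  · rw [(hindep hij).integral_fun_mul_eq_mul_integral
      (hident i).aemeasurable_fst.aestronglyMeasurable
      (hident j).aemeasurable_fst.aestronglyMeasurable,
      (hident i).integral_eq, (hident j).integral_eq, sq]

lemma integral_sum_mul_sum_sum_erase {ι : Type*} [Fintype ι] [DecidableEq ι]
    (U : ι → Ω → ℝ) (V : ι → ι → Ω → ℝ)
    (hint : ∀ j j' k, k ≠ j' → Integrable (fun ω => U j ω * V k j' ω) μ) :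
    ∫ ω, (∑ j, U j ω) * ∑ j', ∑ k ∈ univ.erase j', V k j' ω ∂μ
      = ∑ j, ∑ j', ∑ k ∈ univ.erase j', ∫ ω, U j ω * V k j' ω ∂μ := by
  have hint' : ∀ j j' k, k ∈ univ.erase j' → Integrable (fun ω => U j ω * V k j' ω) μ :=
    fun j j' k hk => hint j j' k (ne_of_mem_erase hk)
  simp_rw [sum_mul, mul_sum]
  rw [integral_finsetSum _ fun j _ => integrable_finsetSum _ fun j' _ =>
    integrable_finsetSum _ (hint' j j')]
  refine sum_congr rfl fun j _ => ?_
  rw [integral_finsetSum _ fun j' _ => integrable_finsetSum _ (hint' j j')]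
  exact sum_congr rfl fun j' _ => integral_finsetSum _ (hint' j j')

end

section
variable {ι K : Type*} [Fintype ι] [DecidableEq ι] [CommRing K]

lemma sum_ite_eq_add_card_sub_one_mul (j : ι) (a b : K) :
    ∑ k, (if j = k then a else b) = a + (Fintype.card ι - 1) * b := by
  rw [sum_ite, filter_eq, filter_ne, if_pos (mem_univ j), sum_singleton, sum_const,
    card_erase_of_mem (mem_univ j), card_univ, nsmul_eq_mul,
    Nat.cast_pred (Fintype.card_pos_iff.2 ⟨j⟩)]

lemma sum_sum_sum_erase_ite_mul_ite (a₁ a₂ b₁ b₂ : K) :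
    ∑ j : ι, ∑ j' : ι, ∑ k ∈ univ.erase j',
        (if j = k then a₂ else a₁) * (if j = j' then b₂ else b₁)
      = Fintype.card ι * (Fintype.card ι - 1)
          * (a₂ * b₁ + a₁ * b₂ + (Fintype.card ι - 2) * a₁ * b₁) := by
  have hinner : ∀ j j' : ι,
      ∑ k ∈ univ.erase j', (if j = k then a₂ else a₁) * (if j = j' then b₂ else b₁)
        = if j = j' then (Fintype.card ι - 1) * a₁ * b₂
          else (a₂ + (Fintype.card ι - 2) * a₁) * b₁ := by
    intro j j'
    rw [← sum_mul, sum_erase_eq_sub (mem_univ j'), sum_ite_eq_add_card_sub_one_mul]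
    split_ifs <;> ring
  simp only [hinner, sum_ite_eq_add_card_sub_one_mul, sum_const, card_univ, nsmul_eq_mul]
  ring
end

theorem rloo_moment_C3_identity_general
    {Ω : Type*} [MeasurableSpace Ω] (μ : Measure Ω) [IsProbabilityMeasure μ]
    (n : ℕ) (hn : 2 ≤ n)
    (R Z : Ω → ℝ) (Rv Zv : Fin n → Ω → ℝ)
    (hR2 : MemLp R 2 μ) (hZ2 : MemLp Z 2 μ)
    (hident : ∀ i, IdentDistrib (fun ω => (Rv i ω, Zv i ω)) (fun ω => (R ω, Z ω)) μ μ)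
    (hindep : iIndepFun (fun i ω => (Rv i ω, Zv i ω)) μ)
    (hcov2 : ∀ j j' k k', covar μ (fun ω => Rv k ω * Rv k' ω)
      (fun ω => Zv j ω * Zv j' ω) = 0)
    :
    (∫ ω, (2 / ((n : ℝ) ^ 2 * ((n : ℝ) - 1))) * (∑ j, Rv j ω * Zv j ω)
        * (∑ j', ∑ k ∈ Finset.univ.erase j', Rv k ω * Zv j' ω) ∂μ)
      = (∫ ω, R ω ^ 2 ∂μ) * ((2 / (n : ℝ)) * (∫ ω, Z ω ∂μ) ^ 2)
        + (∫ ω, R ω ∂μ) ^ 2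
          * ((2 * (n : ℝ) - 2) / (n : ℝ) * (∫ ω, Z ω ∂μ) ^ 2
            + (2 / (n : ℝ)) * variance Z μ) := by
  have hRi : ∀ i, IdentDistrib (Rv i) R μ μ := fun i => (hident i).comp measurable_fst
  have hZi : ∀ i, IdentDistrib (Zv i) Z μ μ := fun i => (hident i).comp measurable_snd
  have hRL2 : ∀ i, MemLp (Rv i) 2 μ := fun i => (hRi i).symm.memLp_snd hR2
  have hZL2 : ∀ i, MemLp (Zv i) 2 μ := fun i => (hZi i).symm.memLp_snd hZ2
  have hpair : Pairwise fun i j =>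
      IndepFun (fun ω => (Rv i ω, Zv i ω)) (fun ω => (Rv j ω, Zv j ω)) μ :=
    fun i j hij => hindep.indepFun hij
  have hint : ∀ j j' k, k ≠ j' →
      Integrable (fun ω => Rv j ω * Zv j ω * (Rv k ω * Zv j' ω)) μ := fun j j' k hk =>
    (memLp_two_mul_of_covar_mul_self_eq_zero (hRL2 j) (hZL2 j) (hcov2 j j j j)).integrable_mul
      (((hpair hk).comp measurable_fst measurable_snd).memLp_two_mul (hRL2 k) (hZL2 j'))
  have hterm : ∀ j j' k, ∫ ω, Rv j ω * Zv j ω * (Rv k ω * Zv j' ω) ∂μ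
      = (if j = k then ∫ ω, R ω ^ 2 ∂μ else (∫ ω, R ω ∂μ) ^ 2)
        * (if j = j' then ∫ ω, Z ω ^ 2 ∂μ else (∫ ω, Z ω ∂μ) ^ 2) := fun j j' k => by
    rw [← integral_mul_of_identDistrib_of_pairwise_indepFun hRi
        (fun i i' h => (hpair h).comp measurable_fst measurable_fst),
      ← integral_mul_of_identDistrib_of_pairwise_indepFun hZi
        (fun i i' h => (hpair h).comp measurable_snd measurable_snd),
      ← integral_mul_eq_of_covar_eq_zero (hcov2 j j' j k)]
    exact integral_congr_ae (.of_forall fun ω => by ring)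
  have hn0 : (n : ℝ) ≠ 0 := by norm_cast; omega
  have hn1 : (n : ℝ) - 1 ≠ 0 := by rw [sub_ne_zero]; norm_cast; omega
  simp only [mul_assoc, integral_const_mul]
  rw [integral_sum_mul_sum_sum_erase _ _ hint]
  simp only [hterm]
  rw [sum_sum_sum_erase_ite_mul_ite, Fintype.card_fin, variance_eq_sub hZ2]
  simp only [Pi.pow_apply]
  field_simp
  ring

theorem rloo_moment_C3_identity
    {Ω : Type*} [MeasurableSpace Ω] (μ : Measure Ω) [IsProbabilityMeasure μ]
    (n : ℕ) (hn : 2 ≤ n)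
    (R Z : Ω → ℝ) (Rv Zv : Fin n → Ω → ℝ)
    (hR2 : MemLp R 2 μ) (hZ2 : MemLp Z 2 μ)
    (hident : ∀ i, IdentDistrib (fun ω => (Rv i ω, Zv i ω)) (fun ω => (R ω, Z ω)) μ μ)
    (hindep : iIndepFun (fun i ω => (Rv i ω, Zv i ω)) μ)
    (hcov1 : ∀ j k, covar μ (Rv k) (Zv j) = 0)
    (hcov2 : ∀ j j' k k', covar μ (fun ω => Rv k ω * Rv k' ω)
      (fun ω => Zv j ω * Zv j' ω) = 0)
    :
    (∫ ω, (2 / ((n : ℝ) ^ 2 * ((n : ℝ) - 1))) * (∑ j, Rv j ω * Zv j ω)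
        * (∑ j', ∑ k ∈ Finset.univ.erase j', Rv k ω * Zv j' ω) ∂μ)
      = (∫ ω, R ω ^ 2 ∂μ) * ((2 / (n : ℝ)) * (∫ ω, Z ω ∂μ) ^ 2)
        + (∫ ω, R ω ∂μ) ^ 2
          * ((2 * (n : ℝ) - 2) / (n : ℝ) * (∫ ω, Z ω ∂μ) ^ 2
            + (2 / (n : ℝ)) * variance Z μ) :=
  rloo_moment_C3_identity_general μ n hn R Z Rv Zv hR2 hZ2 hident hindep hcov2
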